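/- Let (C_n) be a cubical complex of abelian groups, D_n = Σ_{i=1}^n Im(s_i : C_{n-1} → C_n) the subgroup of degenerate elements, and NC_n = ∩_{j=1}^n Ker(∂_j^∞) the normalized part. Then D_* is a subcomplex of the associated chain complex (C_*, ∂) and there is a direct sum decomposition C_n = D_n ⊕ NC_n for every n. -/
import Mathlib


universe u

/-- A cubical complex of abelian groups: `face n i b : C n →+ C (n - 1)` is the face
map `∂_i^0` (for `b = false`) resp. `∂_i^∞` (for `b = true`), and
`degen n i : C (n - 1) →+ C n` is the degeneracy `s_i`; they are relevant for
`1 ≤ i ≤ n` and satisfy the cubical identities (juxtaposition `∂_i^k ∂_j^l` denotes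
the composition applying the right-hand map first). -/
structure CubicalComplex : Type (u + 1) where
  C : ℕ → Type u
  grp : ∀ n, AddCommGroup (C n)
  face : ∀ n : ℕ, ℕ → Bool → C n →+ C (n - 1)
  degen : ∀ n : ℕ, ℕ → C (n - 1) →+ C n
  /-- `∂_i^k ∂_j^l = ∂_{j+1}^k ∂_i^l` for `i < j`. -/
  face_face : ∀ (n i j : ℕ) (k l : Bool), 1 ≤ i → i < j → j ≤ n → ∀ x : C n,
    face (n - 1) i k (face n j l x) = face (n - 1) (j + 1) k (face n i l x)
  /-- `∂_i^k s_j = s_{j-1} ∂_i^k` for `i < j`. -/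
  face_degen_lt : ∀ (n i j : ℕ) (k : Bool), 1 ≤ i → i < j → j ≤ n → ∀ x : C (n - 1),
    face n i k (degen n j x) = degen (n - 1) (j - 1) (face (n - 1) i k x)
  /-- `∂_i^k s_i = id`. -/
  face_degen_eq : ∀ (n i : ℕ) (k : Bool), 1 ≤ i → i ≤ n → ∀ x : C (n - 1),
    face n i k (degen n i x) = x
  /-- `∂_i^k s_j = s_j ∂_{i-1}^k` for `i > j`. -/
  face_degen_gt : ∀ (n i j : ℕ) (k : Bool), 1 ≤ j → j < i → i ≤ n → ∀ x : C (n - 1),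
    face n i k (degen n j x) = degen (n - 1) j (face (n - 1) (i - 1) k x)
  /-- `s_i s_j = s_{j+1} s_i` for `i ≤ j`. -/
  degen_degen : ∀ (n i j : ℕ), 1 ≤ i → i ≤ j → j ≤ n → ∀ x : C (n - 1),
    degen (n + 1) i (degen n j x) = degen (n + 1) (j + 1) (degen n i x)

attribute [instance] CubicalComplex.grp

/-- The boundary map `∂ = ∑_{i=1}^n (-1)^i (∂_i^0 - ∂_i^∞)`. -/
def CubicalComplex.bnd (X : CubicalComplex) (n : ℕ) : X.C n →+ X.C (n - 1) :=
  ∑ i ∈ Finset.Icc 1 n, ((-1 : ℤ) ^ i) • (X.face n i false - X.face n i true)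

/-- The subgroup `D_n = ∑_{i=1}^n Im (s_i : C_{n-1} → C_n)` of degenerate elements. -/
def CubicalComplex.degenSub (X : CubicalComplex) (n : ℕ) : AddSubgroup (X.C n) :=
  ⨆ i ∈ Finset.Icc 1 n, (X.degen n i).range

/-- The normalized part `NC_n = ⋂_{j=1}^n Ker (∂_j^∞)`. -/
def CubicalComplex.normSub (X : CubicalComplex) (n : ℕ) : AddSubgroup (X.C n) :=
  ⨅ j ∈ Finset.Icc 1 n, (X.face n j true).ker

namespace CubicalComplex

variable (X : CubicalComplex)

lemma mem_degenSub {n i : ℕ} (h1 : 1 ≤ i) (h2 : i ≤ n) (y : X.C (n - 1)) :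
    X.degen n i y ∈ X.degenSub n := by
  have h : (X.degen n i).range ≤ X.degenSub n :=
    le_iSup₂ (f := fun i (_ : i ∈ Finset.Icc 1 n) => (X.degen n i).range) i
      (Finset.mem_Icc.mpr ⟨h1, h2⟩)
  exact h ⟨y, rfl⟩

lemma mem_normSub_iff {n : ℕ} (x : X.C n) :
    x ∈ X.normSub n ↔ ∀ j, 1 ≤ j → j ≤ n → X.face n j true x = 0 := by
  simp [normSub, AddSubgroup.mem_iInf, AddMonoidHom.mem_ker, Finset.mem_Icc, and_imp]

/-- `P_i = id - s_i ∂_i^∞`. -/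
def P (n i : ℕ) : X.C n →+ X.C n :=
  AddMonoidHom.id _ - (X.degen n i).comp (X.face n i true)

/-- `Nh n m = P_m ∘ ⋯ ∘ P_1`. -/
def Nh (n : ℕ) : ℕ → (X.C n →+ X.C n)
  | 0 => AddMonoidHom.id _
  | m + 1 => (X.P n (m + 1)).comp (Nh n m)

lemma Nh_succ_apply (n m : ℕ) (x : X.C n) :
    X.Nh n (m + 1) x = X.Nh n m x - X.degen n (m + 1) (X.face n (m + 1) true (X.Nh n m x)) := by
  rw [Nh]; rfl

lemma face_Nh {n : ℕ} (x : X.C n) :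
    ∀ m, m ≤ n → ∀ j, 1 ≤ j → j ≤ m → X.face n j true (X.Nh n m x) = 0 := by
  intro m
  induction m with
  | zero => intro _ j h1 h2; omega
  | succ m ih =>
    intro hmn j h1 h2
    rw [Nh_succ_apply, map_sub]
    rcases Nat.lt_or_ge j (m + 1) with hj | hj
    · have hjm : j ≤ m := by omega
      have h0 : X.face n j true (X.Nh n m x) = 0 := ih (by omega) j h1 hjm
      rw [X.face_degen_lt n j (m + 1) true h1 hj hmn, h0,
        X.face_face n j (m + 1) true true h1 hj hmn, h0]
      simp
    · have hj' : j = m + 1 := by omega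
      subst hj'
      rw [X.face_degen_eq n (m + 1) true (by omega) hmn, sub_self]

lemma sub_Nh_mem {n : ℕ} (x : X.C n) :
    ∀ m, m ≤ n → x - X.Nh n m x ∈ X.degenSub n := by
  intro m
  induction m with
  | zero =>
    intro _
    simp only [Nh, AddMonoidHom.id_apply, sub_self]
    exact zero_mem _
  | succ m ih =>
    intro hmn
    have h : x - X.Nh n (m + 1) x =
        (x - X.Nh n m x) + X.degen n (m + 1) (X.face n (m + 1) true (X.Nh n m x)) := by
      rw [Nh_succ_apply]; abel
    rw [h]
    exact add_mem (ih (by omega)) (X.mem_degenSub (by omega) hmn _)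

lemma Nh_of_norm {n : ℕ} (x : X.C n) (hx : x ∈ X.normSub n) :
    ∀ m, m ≤ n → X.Nh n m x = x := by
  rw [X.mem_normSub_iff] at hx
  intro m
  induction m with
  | zero => intro _; rfl
  | succ m ih =>
    intro hmn
    rw [Nh_succ_apply, ih (by omega), hx (m + 1) (by omega) hmn, map_zero, sub_zero]

lemma Nh_degen_lt {k j : ℕ} (h1 : 1 ≤ j) (hj : j ≤ k + 1) (y : X.C k) :
    ∀ m, m < j → ∃ z, X.Nh (k + 1) m (X.degen (k + 1) j y) = X.degen (k + 1) j z := by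
  intro m
  induction m with
  | zero => intro _; exact ⟨y, rfl⟩
  | succ m ih =>
    intro hm
    obtain ⟨z, hz⟩ := ih (by omega)
    rw [Nh_succ_apply, hz,
      X.face_degen_lt (k + 1) (m + 1) j true (by omega) hm hj]
    have hd := X.degen_degen k (m + 1) (j - 1) (by omega) (by omega) (by omega)
      (X.face ((k + 1) - 1) (m + 1) true z)
    refine ⟨z - X.degen ((k + 1) - 1) (m + 1) (X.face ((k + 1) - 1) (m + 1) true z), ?_⟩
    rw [map_sub]
    congr 1
    exact hd.trans (by rw [Nat.sub_add_cancel h1]; rfl)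

lemma Nh_degen_eq_zero {n j : ℕ} (h1 : 1 ≤ j) (hj : j ≤ n) (y : X.C (n - 1)) :
    X.Nh n n (X.degen n j y) = 0 := by
  obtain ⟨k, rfl⟩ : ∃ k, n = k + 1 := ⟨n - 1, by omega⟩
  obtain ⟨jm, rfl⟩ : ∃ jm, j = jm + 1 := ⟨j - 1, by omega⟩
  obtain ⟨z, hz⟩ := X.Nh_degen_lt (h1 := h1) (hj := hj) y jm (by omega)
  have hzero : X.Nh (k + 1) (jm + 1) (X.degen (k + 1) (jm + 1) y) = 0 := by
    rw [Nh_succ_apply, hz, X.face_degen_eq (k + 1) (jm + 1) true (by omega) hj, sub_self]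
  have : ∀ m, jm + 1 ≤ m → m ≤ k + 1 →
      X.Nh (k + 1) m (X.degen (k + 1) (jm + 1) y) = 0 := by
    intro m
    induction m with
    | zero => intro h _; omega
    | succ m ih =>
      intro hm hmn
      rcases Nat.lt_or_ge (jm + 1) (m + 1) with h | h
      · rw [Nh_succ_apply, ih (by omega) (by omega), map_zero, map_zero, sub_zero]
      · have : jm + 1 = m + 1 := by omega
        rw [← this]; exact hzero
  exact this (k + 1) hj le_rfl

lemma Nh_mem_norm {n : ℕ} (x : X.C n) : X.Nh n n x ∈ X.normSub n := by
  rw [X.mem_normSub_iff]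
  intro j h1 h2
  exact X.face_Nh x n le_rfl j h1 h2

lemma bnd_degen {n j : ℕ} (h1 : 1 ≤ j) (hj : j ≤ n) (y : X.C (n - 1)) :
    X.bnd n (X.degen n j y) ∈ X.degenSub (n - 1) := by
  rw [bnd, AddMonoidHom.finset_sum_apply]
  refine sum_mem fun m hm => ?_
  rw [Finset.mem_Icc] at hm
  obtain ⟨hm1, hm2⟩ := hm
  rw [AddMonoidHom.smul_apply, AddMonoidHom.sub_apply]
  refine AddSubgroup.zsmul_mem _ ?_ _
  rcases lt_trichotomy m j with h | h | h
  · rw [X.face_degen_lt n m j false hm1 h hj, X.face_degen_lt n m j true hm1 h hj]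
    exact sub_mem (X.mem_degenSub (by omega) (by omega) _) (X.mem_degenSub (by omega) (by omega) _)
  · subst h
    rw [X.face_degen_eq n m false hm1 hj, X.face_degen_eq n m true hm1 hj, sub_self]
    exact zero_mem _
  · rw [X.face_degen_gt n m j false h1 h hm2, X.face_degen_gt n m j true h1 h hm2]
    exact sub_mem (X.mem_degenSub (by omega) (by omega) _) (X.mem_degenSub (by omega) (by omega) _)

end CubicalComplex


/-- The degenerate elements form a subcomplex of `(C_*, ∂)`, and there is a direct sum
decomposition `C_n = D_n ⊕ NC_n` for every `n`. -/
theorem CubicalComplex.degen_subcomplex_and_decomposition (X : CubicalComplex) :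
    (∀ n : ℕ, ∀ x ∈ X.degenSub n, X.bnd n x ∈ X.degenSub (n - 1)) ∧
    (∀ n : ℕ, IsCompl (X.degenSub n) (X.normSub n)) := by
  constructor
  · intro n x hx
    refine (iSup₂_le fun i hi => ?_ : X.degenSub n ≤ (X.degenSub (n - 1)).comap (X.bnd n)) hx
    rintro _ ⟨y, rfl⟩
    rw [Finset.mem_Icc] at hi
    exact X.bnd_degen hi.1 hi.2 y
  · intro n
    constructor
    · rw [disjoint_iff, eq_bot_iff]
      intro x hx
      rw [AddSubgroup.mem_inf] at hx
      have h1 : X.Nh n n x = x := X.Nh_of_norm x hx.2 n le_rfl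
      have h2 : X.Nh n n x = 0 := by
        have hker : X.degenSub n ≤ (X.Nh n n).ker := by
          refine iSup₂_le fun i hi => ?_
          rintro _ ⟨y, rfl⟩
          rw [Finset.mem_Icc] at hi
          exact X.Nh_degen_eq_zero hi.1 hi.2 y
        exact hker hx.1
      rw [AddSubgroup.mem_bot, ← h1, h2]
    · rw [codisjoint_iff_le_sup]
      intro x _
      have h : x = (x - X.Nh n n x) + X.Nh n n x := by abel
      rw [h]
      exact add_mem (AddSubgroup.mem_sup_left (X.sub_Nh_mem x n le_rfl))
        (AddSubgroup.mem_sup_right (X.Nh_mem_norm x))
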